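/- arXiv:1109.0043 — 2 statements merged into one kernel-verified Lean document; each statement's English description precedes it below -/
import Mathlib

section
/- For any càdlàg functions f, g : [a,b] → ℝ and any c_1, c_2 ≥ 0, one has TV^{c_1+c_2}(f+g,[a,b]) ≤ TV^{c_1}(f,[a,b]) + TV^{c_2}(g,[a,b]), where the inequality is understood in [0,∞] (both sides may be infinite when c_1 = 0 or c_2 = 0). The analogous inequalities hold for the upward truncated variation UTV^c and the downward truncated variation DTV^c. -/
open MeasureTheory ProbabilityTheory Filter Set
open scoped ENNReal NNReal Topology

noncomputable section

/-- Truncated variation of `f` on `[a,b]` with threshold `c`: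
`sup` over finite nondecreasing sequences in `[a,b]` of `∑ max(|f(t_{i+1}) - f(t_i)| - c, 0)`. -/
def TV (f : ℝ → ℝ) (a b c : ℝ) : ℝ≥0∞ :=
  ⨆ (n : ℕ) (t : Fin (n + 1) → ℝ) (_ : Monotone t) (_ : ∀ i, t i ∈ Set.Icc a b),
    ∑ i : Fin n, ENNReal.ofReal (|f (t i.succ) - f (t i.castSucc)| - c)

/-- Upward truncated variation of `f` on `[a,b]` with threshold `c`:
`sup` over interleaved sequences `a ≤ t_1 ≤ s_1 ≤ t_2 ≤ … ≤ s_n ≤ b` of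
`∑ max(f(s_i) - f(t_i) - c, 0)`. -/
def UTV (f : ℝ → ℝ) (a b c : ℝ) : ℝ≥0∞ :=
  ⨆ (n : ℕ) (t : Fin n → ℝ) (s : Fin n → ℝ)
    (_ : ∀ i, a ≤ t i ∧ t i ≤ s i ∧ s i ≤ b)
    (_ : ∀ i j, i < j → s i ≤ t j),
    ∑ i : Fin n, ENNReal.ofReal (f (s i) - f (t i) - c)

/-- Downward truncated variation of `f` on `[a,b]` with threshold `c`. -/
def DTV (f : ℝ → ℝ) (a b c : ℝ) : ℝ≥0∞ := UTV (fun x => - f x) a b c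

/-- A standard one-dimensional Brownian motion started at `0`, under the measure `P`:
measurable in `ω`, continuous paths, `W 0 = 0`, Gaussian increments with variance `t - s`,
and independent increments. -/
structure IsBrownian {Ω : Type*} [MeasurableSpace Ω] (P : Measure Ω) (W : ℝ → Ω → ℝ) :
    Prop where
  meas : ∀ t, Measurable (W t)
  init : ∀ ω, W 0 ω = 0
  cont : ∀ ω, Continuous fun t => W t ω
  gauss : ∀ s t : ℝ, 0 ≤ s → s ≤ t →
    Measure.map (fun ω => W t ω - W s ω) P = gaussianReal 0 (Real.toNNReal (t - s))
  indep : ∀ (n : ℕ) (τ : Fin (n + 1) → ℝ), Monotone τ → (∀ i, 0 ≤ τ i) →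
    iIndepFun
      (fun (i : Fin n) ω => W (τ i.succ) ω - W (τ i.castSucc) ω) P

/-- A càdlàg function on `[a,b]`: right-continuous on `[a,b)` and with left limits on `(a,b]`. -/
def Cadlag (f : ℝ → ℝ) (a b : ℝ) : Prop :=
  (∀ x ∈ Set.Ico a b, ContinuousWithinAt f (Set.Ici x) x) ∧
  (∀ x ∈ Set.Ioc a b, ∃ L : ℝ, Tendsto f (𝓝[<] x) (𝓝 L))

/-! Every partition sum for `f + g` is bounded termwise by the sum of the corresponding
partition sums for `f` and `g`, since `(x + y - (c₁ + c₂))⁺ ≤ (x - c₁)⁺ + (y - c₂)⁺` and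
`|x + y| ≤ |x| + |y|`; the suprema inherit the bound. -/

lemma ENNReal.ofReal_add_sub_add_le (x y c₁ c₂ : ℝ) :
    ENNReal.ofReal (x + y - (c₁ + c₂)) ≤ ENNReal.ofReal (x - c₁) + ENNReal.ofReal (y - c₂) :=
  (ENNReal.ofReal_le_ofReal (by linarith)).trans ENNReal.ofReal_add_le

lemma ENNReal.ofReal_abs_add_sub_add_le (x y c₁ c₂ : ℝ) :
    ENNReal.ofReal (|x + y| - (c₁ + c₂)) ≤
      ENNReal.ofReal (|x| - c₁) + ENNReal.ofReal (|y| - c₂) :=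
  (ENNReal.ofReal_le_ofReal (by linarith [abs_add_le x y])).trans
    (ENNReal.ofReal_add_sub_add_le _ _ c₁ c₂)

lemma sum_le_TV (f : ℝ → ℝ) (a b c : ℝ) {n : ℕ} {t : Fin (n + 1) → ℝ} (ht : Monotone t)
    (htab : ∀ i, t i ∈ Set.Icc a b) :
    ∑ i : Fin n, ENNReal.ofReal (|f (t i.succ) - f (t i.castSucc)| - c) ≤ TV f a b c :=
  le_iSup₂_of_le n t <| le_iSup₂_of_le ht htab le_rfl

lemma sum_le_UTV (f : ℝ → ℝ) {a b : ℝ} (c : ℝ) {n : ℕ} {t s : Fin n → ℝ}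
    (hts : ∀ i, a ≤ t i ∧ t i ≤ s i ∧ s i ≤ b) (hst : ∀ i j, i < j → s i ≤ t j) :
    ∑ i : Fin n, ENNReal.ofReal (f (s i) - f (t i) - c) ≤ UTV f a b c :=
  le_iSup₂_of_le n t <| le_iSup₂_of_le s hts <| le_iSup_of_le hst le_rfl

theorem TV_add_le (f g : ℝ → ℝ) (a b c₁ c₂ : ℝ) :
    TV (fun x => f x + g x) a b (c₁ + c₂) ≤ TV f a b c₁ + TV g a b c₂ := by
  refine iSup₂_le fun n t => iSup₂_le fun ht htab => ?_
  calc ∑ i : Fin n, ENNReal.ofReal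
          (|f (t i.succ) + g (t i.succ) - (f (t i.castSucc) + g (t i.castSucc))| - (c₁ + c₂))
      ≤ ∑ i : Fin n, (ENNReal.ofReal (|f (t i.succ) - f (t i.castSucc)| - c₁)
          + ENNReal.ofReal (|g (t i.succ) - g (t i.castSucc)| - c₂)) := by
        gcongr with i
        rw [add_sub_add_comm]
        exact ENNReal.ofReal_abs_add_sub_add_le _ _ c₁ c₂
    _ ≤ TV f a b c₁ + TV g a b c₂ := by
        rw [Finset.sum_add_distrib]
        exact add_le_add (sum_le_TV f a b c₁ ht htab) (sum_le_TV g a b c₂ ht htab)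

theorem UTV_add_le (f g : ℝ → ℝ) (a b c₁ c₂ : ℝ) :
    UTV (fun x => f x + g x) a b (c₁ + c₂) ≤ UTV f a b c₁ + UTV g a b c₂ := by
  refine iSup₂_le fun n t => iSup₂_le fun s hts => iSup_le fun hst => ?_
  calc ∑ i : Fin n, ENNReal.ofReal (f (s i) + g (s i) - (f (t i) + g (t i)) - (c₁ + c₂))
      ≤ ∑ i : Fin n, (ENNReal.ofReal (f (s i) - f (t i) - c₁)
          + ENNReal.ofReal (g (s i) - g (t i) - c₂)) := by
        gcongr with i
        rw [add_sub_add_comm]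
        exact ENNReal.ofReal_add_sub_add_le _ _ c₁ c₂
    _ ≤ UTV f a b c₁ + UTV g a b c₂ := by
        rw [Finset.sum_add_distrib]
        exact add_le_add (sum_le_UTV f c₁ hts hst) (sum_le_UTV g c₂ hts hst)

theorem DTV_add_le (f g : ℝ → ℝ) (a b c₁ c₂ : ℝ) :
    DTV (fun x => f x + g x) a b (c₁ + c₂) ≤ DTV f a b c₁ + DTV g a b c₂ := by
  simpa only [DTV, neg_add] using UTV_add_le (fun x => -f x) (fun x => -g x) a b c₁ c₂

theorem truncated_variation_subadditive_general
    (a b : ℝ) (f g : ℝ → ℝ)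
    (c₁ c₂ : ℝ) :
    TV (fun x => f x + g x) a b (c₁ + c₂) ≤ TV f a b c₁ + TV g a b c₂ ∧
    UTV (fun x => f x + g x) a b (c₁ + c₂) ≤ UTV f a b c₁ + UTV g a b c₂ ∧
    DTV (fun x => f x + g x) a b (c₁ + c₂) ≤ DTV f a b c₁ + DTV g a b c₂ :=
  ⟨TV_add_le f g a b c₁ c₂, UTV_add_le f g a b c₁ c₂, DTV_add_le f g a b c₁ c₂⟩

/-- For càdlàg `f, g` on `[a,b]` and `c₁, c₂ ≥ 0`,
`TV^{c₁+c₂}(f+g) ≤ TV^{c₁}(f) + TV^{c₂}(g)` in `[0,∞]`, and analogously for `UTV` and `DTV`. -/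
theorem truncated_variation_subadditive
    (a b : ℝ) (hab : a ≤ b) (f g : ℝ → ℝ)
    (hf : Cadlag f a b) (hg : Cadlag g a b)
    (c₁ c₂ : ℝ) (hc₁ : 0 ≤ c₁) (hc₂ : 0 ≤ c₂) :
    TV (fun x => f x + g x) a b (c₁ + c₂) ≤ TV f a b c₁ + TV g a b c₂ ∧
    UTV (fun x => f x + g x) a b (c₁ + c₂) ≤ UTV f a b c₁ + UTV g a b c₂ ∧
    DTV (fun x => f x + g x) a b (c₁ + c₂) ≤ DTV f a b c₁ + DTV g a b c₂ :=
  truncated_variation_subadditive_general a b f g c₁ c₂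
end
end

section
/- Let W be a standard one-dimensional Brownian motion with W_0 = 0, let μ : ℝ → ℝ be a measurable function with |μ(x)| ≤ μ* for all x, and let X be a continuous process satisfying, almost surely, X_t = X_0 + W_t + ∫_0^t μ(X_s) ds for all t ≥ 0. Then for every t ≥ 0, δ > 0 and b > 0, P( sup_{s∈[t, t+δ]} |X_s − X_t| ≥ (μ* + b) δ ) ≤ 2 exp(−b^2 δ / 2). -/
open MeasureTheory ProbabilityTheory Filter Set
open scoped ENNReal NNReal Topology

noncomputable section

/-! On the event where the equation holds, `X s - X t = W s - W t + ∫ r in t..s, μ (X r)`, so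
the drift moves `X` by at most `μ* δ` on `[t, t + δ]` and it suffices to show
`P (sup_{s ∈ [t, t + δ]} |W s - W t| ≥ c) ≤ 2 exp (-c² / (2δ))` for `c = b δ`.

On a finite grid `t = τ 0 ≤ … ≤ τ n ≤ t + δ` this is an exponential maximal inequality for the
random walk `S k = W (τ k) - W (τ 0)` with independent Gaussian increments: splitting according
to the first index at which the walk reaches `c`, independence of past and future increments
gives `e^{λc} P(max_k S k ≥ c) ≤ E e^{λ S n} ≤ e^{λ²δ/2}`, and `λ = c/δ` gives `exp (-c²/(2δ))`;
the reflected motion `-W` handles the lower tail. Dyadic grids increase to a dense subset of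
`[t, t + δ]`, so continuity of the paths and of the measure carry the bound to the supremum. -/
open Real Finset

section FirstPassage

variable {Ω : Type*} (S : ℕ → Ω → ℝ) (c : ℝ)

def firstPassage (k : ℕ) : Set Ω := {ω | c ≤ S k ω ∧ ∀ j < k, S j ω < c}

lemma pairwise_disjoint_firstPassage : Pairwise (Function.onFun Disjoint (firstPassage S c)) :=
  (pairwise_disjoint_on _).2 fun _ _ hij =>
    Set.disjoint_left.2 fun _ hi hj => (hj.2 _ hij).not_ge hi.1

lemma setOf_exists_le_subset_biUnion_firstPassage (n : ℕ) :
    {ω | ∃ k ≤ n, c ≤ S k ω} ⊆ ⋃ k ∈ range (n + 1), firstPassage S c k := by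
  classical
  rintro ω ⟨k, hkn, hk⟩
  have hex : ∃ m, c ≤ S m ω := ⟨k, hk⟩
  refine Set.mem_biUnion (x := Nat.find hex) ?_ ⟨Nat.find_spec hex, fun j hj => ?_⟩
  · exact mem_range.2 (Nat.lt_succ_of_le ((Nat.find_min' hex hk).trans hkn))
  · exact not_le.1 (Nat.find_min hex hj)

lemma measurableSet_firstPassage {_ : MeasurableSpace Ω} {k : ℕ}
    (hS : ∀ j ≤ k, Measurable (S j)) : MeasurableSet (firstPassage S c k) := by
  refine (measurableSet_le measurable_const (hS k le_rfl)).inter ?_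
  exact measurableSet_setOfPred.2 <| Measurable.forall fun j => Measurable.forall fun hj =>
    measurableSet_setOfPred.1 (measurableSet_lt (hS j hj.le) measurable_const)

end FirstPassage

section PartialSums

variable {Ω : Type*} {mΩ : MeasurableSpace Ω} {P : Measure Ω} {n : ℕ} {ξ : ℕ → Ω → ℝ}

abbrev pastSigma (ξ : ℕ → Ω → ℝ) (n k : ℕ) : MeasurableSpace Ω :=
  ⨆ i ∈ {i : Fin n | (i : ℕ) < k}, MeasurableSpace.comap (ξ i) inferInstance

abbrev futureSigma (ξ : ℕ → Ω → ℝ) (n k : ℕ) : MeasurableSpace Ω :=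
  ⨆ i ∈ {i : Fin n | k ≤ (i : ℕ)}, MeasurableSpace.comap (ξ i) inferInstance

lemma pastSigma_le (hξ : ∀ i, Measurable (ξ i)) (k : ℕ) : pastSigma ξ n k ≤ mΩ :=
  iSup₂_le fun i _ => (hξ i).comap_le

lemma futureSigma_le (hξ : ∀ i, Measurable (ξ i)) (k : ℕ) : futureSigma ξ n k ≤ mΩ :=
  iSup₂_le fun i _ => (hξ i).comap_le

lemma indep_pastSigma_futureSigma (hξ : ∀ i, Measurable (ξ i))
    (hind : iIndepFun (fun i : Fin n => ξ i) P) (k : ℕ) :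
    Indep (pastSigma ξ n k) (futureSigma ξ n k) P :=
  indep_iSup_of_disjoint (fun i : Fin n => (hξ i).comap_le)
    ((iIndepFun_iff_iIndep _ (fun i : Fin n => ξ i) _).1 hind)
    (Set.disjoint_left.2 fun i (hi : (i : ℕ) < k) (hi' : k ≤ (i : ℕ)) => hi'.not_gt hi)

lemma measurable_partialSum_pastSigma {j k : ℕ} (hjk : j ≤ k) (hkn : k ≤ n) :
    Measurable[pastSigma ξ n k] fun ω => ∑ i ∈ range j, ξ i ω := by
  refine Finset.measurable_sum _ fun i hi => Measurable.of_comap_le ?_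
  have hik : i < k := (mem_range.1 hi).trans_le hjk
  exact le_iSup₂_of_le (⟨i, hik.trans_le hkn⟩ : Fin n) hik le_rfl

lemma measurable_sum_Ico_futureSigma (k : ℕ) :
    Measurable[futureSigma ξ n k] fun ω => ∑ i ∈ Ico k n, ξ i ω := by
  refine Finset.measurable_sum _ fun i hi => Measurable.of_comap_le ?_
  obtain ⟨hki, hin⟩ := mem_Ico.1 hi
  exact le_iSup₂_of_le (⟨i, hin⟩ : Fin n) hki le_rfl

lemma ofReal_exp_mul_measure_firstPassage_mul_le (hξ : ∀ i, Measurable (ξ i))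
    (hind : iIndepFun (fun i : Fin n => ξ i) P) {l : ℝ} (hl : 0 ≤ l) (c : ℝ) {k : ℕ}
    (hkn : k ≤ n) :
    ENNReal.ofReal (exp (l * c)) * P (firstPassage (fun k ω => ∑ i ∈ range k, ξ i ω) c k)
        * ∫⁻ ω, ENNReal.ofReal (exp (l * ∑ i ∈ Ico k n, ξ i ω)) ∂P
      ≤ ∫⁻ ω in firstPassage (fun k ω => ∑ i ∈ range k, ξ i ω) c k,
          ENNReal.ofReal (exp (l * ∑ i ∈ range n, ξ i ω)) ∂P := by
  set A := firstPassage (fun k ω => ∑ i ∈ range k, ξ i ω) c k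
  have hA : MeasurableSet[pastSigma ξ n k] A :=
    measurableSet_firstPassage _ c fun j hj => measurable_partialSum_pastSigma hj hkn
  have hfactor := lintegral_mul_eq_lintegral_mul_lintegral_of_independent_measurableSpace
    (pastSigma_le hξ k) (futureSigma_le hξ k)
    (indep_pastSigma_futureSigma hξ hind k) (measurable_const.indicator hA)
    ((measurable_sum_Ico_futureSigma k).const_mul l).exp.ennreal_ofReal
      (f := A.indicator fun _ => ENNReal.ofReal (exp (l * c)))
  have hAm : MeasurableSet A := pastSigma_le hξ k _ hA
  calc ENNReal.ofReal (exp (l * c)) * P A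
        * ∫⁻ ω, ENNReal.ofReal (exp (l * ∑ i ∈ Ico k n, ξ i ω)) ∂P
      = ∫⁻ ω, A.indicator (fun _ => ENNReal.ofReal (exp (l * c))) ω
          * ENNReal.ofReal (exp (l * ∑ i ∈ Ico k n, ξ i ω)) ∂P := by
        rw [hfactor, lintegral_indicator_const hAm]
    _ ≤ ∫⁻ ω, A.indicator (fun ω => ENNReal.ofReal (exp (l * ∑ i ∈ range n, ξ i ω))) ω ∂P := by
        refine lintegral_mono fun ω => ?_
        by_cases hω : ω ∈ A
        · simp only [Set.indicator_of_mem hω]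
          rw [← ENNReal.ofReal_mul (exp_nonneg _), ← exp_add, ← sum_range_add_sum_Ico _ hkn,
            mul_add]
          gcongr
          exact hω.1
        · simp [Set.indicator_of_notMem hω]
    _ = _ := lintegral_indicator hAm _

theorem ofReal_exp_mul_measure_exists_le_partialSum_le (hξ : ∀ i, Measurable (ξ i))
    (hind : iIndepFun (fun i : Fin n => ξ i) P) {l : ℝ} (hl : 0 ≤ l) (c : ℝ)
    (hmgf : ∀ k ≤ n, 1 ≤ ∫⁻ ω, ENNReal.ofReal (exp (l * ∑ i ∈ Ico k n, ξ i ω)) ∂P) :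
    ENNReal.ofReal (exp (l * c)) * P {ω | ∃ k ≤ n, c ≤ ∑ i ∈ range k, ξ i ω}
      ≤ ∫⁻ ω, ENNReal.ofReal (exp (l * ∑ i ∈ range n, ξ i ω)) ∂P := by
  set A := firstPassage (fun k ω => ∑ i ∈ range k, ξ i ω) c
  have hA (k : ℕ) : MeasurableSet (A k) :=
    measurableSet_firstPassage _ c fun j _ => Finset.measurable_sum _ fun i _ => hξ i
  have hdisj : Set.PairwiseDisjoint ↑(range (n + 1)) A :=
    (pairwise_disjoint_firstPassage _ c).set_pairwise _
  calc ENNReal.ofReal (exp (l * c)) * P {ω | ∃ k ≤ n, c ≤ ∑ i ∈ range k, ξ i ω}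
      ≤ ENNReal.ofReal (exp (l * c)) * ∑ k ∈ range (n + 1), P (A k) := by
        rw [← measure_biUnion_finset hdisj fun k _ => hA k]
        gcongr
        exact setOf_exists_le_subset_biUnion_firstPassage _ c n
    _ ≤ ∑ k ∈ range (n + 1), ENNReal.ofReal (exp (l * c)) * P (A k)
          * ∫⁻ ω, ENNReal.ofReal (exp (l * ∑ i ∈ Ico k n, ξ i ω)) ∂P := by
        rw [mul_sum]
        exact sum_le_sum fun k hk => le_mul_of_one_le_right' (hmgf k (by grind))
    _ ≤ ∑ k ∈ range (n + 1), ∫⁻ ω in A k, ENNReal.ofReal (exp (l * ∑ i ∈ range n, ξ i ω)) ∂P :=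
        sum_le_sum fun k hk =>
          ofReal_exp_mul_measure_firstPassage_mul_le hξ hind hl c (by grind)
    _ = ∫⁻ ω in ⋃ k ∈ range (n + 1), A k, ENNReal.ofReal (exp (l * ∑ i ∈ range n, ξ i ω)) ∂P :=
        (lintegral_biUnion_finset hdisj (fun k _ => hA k) _).symm
    _ ≤ _ := setLIntegral_le_lintegral _ _

end PartialSums

lemma lintegral_ofReal_exp_mul_gaussianReal (m : ℝ) (v : ℝ≥0) (l : ℝ) :
    ∫⁻ x, ENNReal.ofReal (exp (l * x)) ∂gaussianReal m v
      = ENNReal.ofReal (exp (m * l + v * l ^ 2 / 2)) := by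
  rw [← ofReal_integral_eq_lintegral_ofReal (integrable_exp_mul_gaussianReal l)
    (ae_of_all _ fun _ => (exp_pos _).le)]
  exact congrArg ENNReal.ofReal (congrFun mgf_fun_id_gaussianReal l)

lemma exists_le_pow_two_lt_of_continuousAt {g : ℝ → ℝ} {u c : ℝ} (hg : ContinuousAt g u)
    (hu : u ∈ Icc (0 : ℝ) 1) (hc : c < g u) :
    ∃ N k : ℕ, k ≤ 2 ^ N ∧ c < g (k / 2 ^ N) := by
  have hlim : Tendsto (fun N : ℕ => (⌊u * 2 ^ N⌋₊ : ℝ) / 2 ^ N) atTop (𝓝 u) :=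
    (tendsto_nat_floor_mul_div_atTop hu.1).comp (tendsto_pow_atTop_atTop_of_one_lt one_lt_two)
  obtain ⟨N, hN⟩ := ((hg.tendsto.comp hlim).eventually (lt_mem_nhds hc)).exists
  refine ⟨N, ⌊u * 2 ^ N⌋₊, Nat.floor_le_of_le ?_, hN⟩
  push_cast
  exact mul_le_of_le_one_left (by positivity) hu.2

namespace IsBrownian

variable {Ω : Type*} {mΩ : MeasurableSpace Ω} {P : Measure Ω} {W : ℝ → Ω → ℝ}

lemma neg (hW : IsBrownian P W) : IsBrownian P fun t ω => -W t ω where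
  meas t := (hW.meas t).neg
  init ω := by simp [hW.init ω]
  cont ω := (hW.cont ω).neg
  gauss s t hs hst := by
    have h : (fun ω => -W t ω - -W s ω) = (fun x => -x) ∘ fun ω => W t ω - W s ω := by
      ext ω; simp only [Function.comp_apply]; ring
    have hm : Measurable fun ω => W t ω - W s ω := (hW.meas t).sub (hW.meas s)
    rw [h, ← Measure.map_map measurable_neg hm, hW.gauss s t hs hst,
      gaussianReal_map_neg, neg_zero]
  indep n τ hτ hτ0 := by
    convert (hW.indep n τ hτ hτ0).comp (fun _ x => -x) fun _ => measurable_neg using 2 with i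
    ext ω; simp only [Function.comp_apply]; ring

lemma lintegral_ofReal_exp_mul_sub (hW : IsBrownian P W) (l : ℝ) {s u : ℝ} (hs : 0 ≤ s)
    (hsu : s ≤ u) :
    ∫⁻ ω, ENNReal.ofReal (exp (l * (W u ω - W s ω))) ∂P
      = ENNReal.ofReal (exp (l ^ 2 * (u - s) / 2)) := by
  have hm : Measurable fun ω => W u ω - W s ω := (hW.meas u).sub (hW.meas s)
  rw [← lintegral_map (f := fun x => ENNReal.ofReal (exp (l * x))) (by fun_prop) hm,
    hW.gauss s u hs hsu, lintegral_ofReal_exp_mul_gaussianReal,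
    Real.coe_toNNReal _ (sub_nonneg.2 hsu)]
  ring_nf

lemma iIndepFun_increments (hW : IsBrownian P W) {τ : ℕ → ℝ} (hτ : Monotone τ) (hτ0 : 0 ≤ τ 0)
    (n : ℕ) : iIndepFun (fun i : Fin n => fun ω => W (τ (i + 1)) ω - W (τ i) ω) P := by
  simpa using hW.indep n (fun i => τ i) (fun i j hij => hτ hij)
    fun i => hτ0.trans (hτ (Nat.zero_le _))

lemma measure_exists_le_sub_le_of_monotone (hW : IsBrownian P W) {τ : ℕ → ℝ} (hτ : Monotone τ)
    (hτ0 : 0 ≤ τ 0) {n : ℕ} {δ : ℝ} (hδ : 0 < δ) (hspan : τ n - τ 0 ≤ δ) {c : ℝ} (hc : 0 ≤ c) :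
    P {ω | ∃ k ≤ n, c ≤ W (τ k) ω - W (τ 0) ω} ≤ ENNReal.ofReal (exp (-c ^ 2 / (2 * δ))) := by
  set l := c / δ with hl
  have hτ_nonneg (k : ℕ) : 0 ≤ τ k := hτ0.trans (hτ k.zero_le)
  have hsum (k : ℕ) (ω : Ω) :
      ∑ i ∈ range k, (W (τ (i + 1)) ω - W (τ i) ω) = W (τ k) ω - W (τ 0) ω :=
    sum_range_sub (fun i => W (τ i) ω) k
  have hmgf (k : ℕ) (hk : k ≤ n) :
      ∫⁻ ω, ENNReal.ofReal (exp (l * ∑ i ∈ Ico k n, (W (τ (i + 1)) ω - W (τ i) ω))) ∂P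
        = ENNReal.ofReal (exp (l ^ 2 * (τ n - τ k) / 2)) := by
    simp_rw [sum_Ico_eq_sub _ hk, hsum, sub_sub_sub_cancel_right]
    exact hW.lintegral_ofReal_exp_mul_sub l (hτ_nonneg k) (hτ hk)
  have hmax := ofReal_exp_mul_measure_exists_le_partialSum_le
    (ξ := fun i ω => W (τ (i + 1)) ω - W (τ i) ω) (fun i => (hW.meas _).sub (hW.meas _))
    (hW.iIndepFun_increments hτ hτ0 n) (l := l) (by positivity) c fun k hk => by
      rw [hmgf k hk]
      exact ENNReal.one_le_ofReal.2 (one_le_exp (by have := hτ hk; positivity))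
  simp only [hsum] at hmax
  rw [hW.lintegral_ofReal_exp_mul_sub l hτ0 (hτ n.zero_le)] at hmax
  have hexp : l ^ 2 * δ / 2 = l * c + -c ^ 2 / (2 * δ) := by
    rw [hl]
    field_simp
    ring
  refine (ENNReal.mul_le_mul_iff_right (by positivity) ENNReal.ofReal_ne_top).1 (hmax.trans ?_)
  rw [← ENNReal.ofReal_mul (exp_nonneg _), ← exp_add, ← hexp]
  gcongr

lemma measure_exists_le_abs_sub_le_of_monotone (hW : IsBrownian P W) {τ : ℕ → ℝ}
    (hτ : Monotone τ) (hτ0 : 0 ≤ τ 0) {n : ℕ} {δ : ℝ} (hδ : 0 < δ) (hspan : τ n - τ 0 ≤ δ)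
    {c : ℝ} (hc : 0 ≤ c) :
    P {ω | ∃ k ≤ n, c ≤ |W (τ k) ω - W (τ 0) ω|}
      ≤ ENNReal.ofReal (2 * exp (-c ^ 2 / (2 * δ))) := by
  have hsplit : {ω | ∃ k ≤ n, c ≤ |W (τ k) ω - W (τ 0) ω|}
      ⊆ {ω | ∃ k ≤ n, c ≤ W (τ k) ω - W (τ 0) ω}
        ∪ {ω | ∃ k ≤ n, c ≤ -W (τ k) ω - -W (τ 0) ω} := by
    rintro ω ⟨k, hk, hck⟩
    rcases le_abs.1 hck with h | h
    exacts [Or.inl ⟨k, hk, h⟩, Or.inr ⟨k, hk, by linarith⟩]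
  calc P {ω | ∃ k ≤ n, c ≤ |W (τ k) ω - W (τ 0) ω|}
      ≤ P {ω | ∃ k ≤ n, c ≤ W (τ k) ω - W (τ 0) ω}
        + P {ω | ∃ k ≤ n, c ≤ -W (τ k) ω - -W (τ 0) ω} :=
        (measure_mono hsplit).trans (measure_union_le _ _)
    _ ≤ ENNReal.ofReal (exp (-c ^ 2 / (2 * δ))) + ENNReal.ofReal (exp (-c ^ 2 / (2 * δ))) :=
        add_le_add (hW.measure_exists_le_sub_le_of_monotone hτ hτ0 hδ hspan hc)
          (hW.neg.measure_exists_le_sub_le_of_monotone hτ hτ0 hδ hspan hc)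
    _ = ENNReal.ofReal (2 * exp (-c ^ 2 / (2 * δ))) := by
        rw [← ENNReal.ofReal_add (exp_nonneg _) (exp_nonneg _), ← two_mul]

lemma measure_exists_Icc_lt_abs_sub_le (hW : IsBrownian P W) {t δ c : ℝ} (ht : 0 ≤ t)
    (hδ : 0 < δ) (hc : 0 ≤ c) :
    P {ω | ∃ s ∈ Icc t (t + δ), c < |W s ω - W t ω|}
      ≤ ENNReal.ofReal (2 * exp (-c ^ 2 / (2 * δ))) := by
  set τ : ℕ → ℕ → ℝ := fun N k => t + δ * (k / 2 ^ N)
  set A : ℕ → Set Ω := fun N => {ω | ∃ k ≤ 2 ^ N, c ≤ |W (τ N k) ω - W (τ N 0) ω|}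
  have hτ0 (N : ℕ) : τ N 0 = t := by simp [τ]
  have hτ_mono (N : ℕ) : Monotone (τ N) := fun k k' hkk' => by
    simp only [τ]
    gcongr
  have hA (N : ℕ) : P (A N) ≤ ENNReal.ofReal (2 * exp (-c ^ 2 / (2 * δ))) :=
    hW.measure_exists_le_abs_sub_le_of_monotone (hτ_mono N) (by rw [hτ0]; exact ht) hδ
      (by simp [τ]) hc
  have hA_mono : Monotone A := monotone_nat_of_le_succ fun N ω ⟨k, hk, hck⟩ =>
    ⟨2 * k, by rw [pow_succ]; omega, by
      convert hck using 4 <;> simp only [τ] <;> push_cast <;> ring⟩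
  have hcover : {ω | ∃ s ∈ Icc t (t + δ), c < |W s ω - W t ω|} ⊆ ⋃ N, A N := by
    rintro ω ⟨s, hs, hcs⟩
    have hu : (s - t) / δ ∈ Icc (0 : ℝ) 1 := by
      constructor
      · exact div_nonneg (by linarith [hs.1]) hδ.le
      · rw [div_le_one hδ]; linarith [hs.2]
    have hg : Continuous fun u => |W (t + δ * u) ω - W t ω| := by
      have := hW.cont ω
      fun_prop
    obtain ⟨N, k, hk, hck⟩ := exists_le_pow_two_lt_of_continuousAt hg.continuousAt hu
      (by rwa [mul_div_cancel₀ _ hδ.ne', add_sub_cancel])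
    exact Set.mem_iUnion.2 ⟨N, k, hk, by rw [hτ0]; exact hck.le⟩
  calc P {ω | ∃ s ∈ Icc t (t + δ), c < |W s ω - W t ω|}
      ≤ P (⋃ N, A N) := measure_mono hcover
    _ = ⨆ N, P (A N) := hA_mono.measure_iUnion
    _ ≤ _ := iSup_le hA

lemma measure_exists_Icc_le_abs_sub_le (hW : IsBrownian P W) {t δ c : ℝ} (ht : 0 ≤ t)
    (hδ : 0 < δ) (hc : 0 < c) :
    P {ω | ∃ s ∈ Icc t (t + δ), c ≤ |W s ω - W t ω|}
      ≤ ENNReal.ofReal (2 * exp (-c ^ 2 / (2 * δ))) := by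
  have hbound : Continuous fun c : ℝ => ENNReal.ofReal (2 * exp (-c ^ 2 / (2 * δ))) :=
    ENNReal.continuous_ofReal.comp (by fun_prop)
  -- grid points only detect strict exceedances, so let `c' ↑ c`
  refine ge_of_tendsto (hbound.continuousAt.tendsto.mono_left nhdsWithin_le_nhds)
    (?_ : ∀ᶠ c' in 𝓝[<] c, _)
  filter_upwards [Ioo_mem_nhdsLT hc] with c' hc'
  refine (measure_mono ?_).trans (hW.measure_exists_Icc_lt_abs_sub_le ht hδ hc'.1.le)
  rintro ω ⟨s, hs, h⟩
  exact ⟨s, hs, hc'.2.trans_le h⟩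

end IsBrownian

lemma exists_mem_Icc_le_of_le_ciSup {α β : Type*} [LinearOrder α] [TopologicalSpace α]
    [CompactIccSpace α] [ConditionallyCompleteLinearOrder β] [TopologicalSpace β]
    [OrderClosedTopology β] {f : α → β} {a b : α} {c : β} (hf : ContinuousOn f (Icc a b))
    (hab : a ≤ b) (hc : c ≤ ⨆ s : Icc a b, f s) : ∃ s ∈ Icc a b, c ≤ f s := by
  obtain ⟨s, hs, hmax⟩ := isCompact_Icc.exists_isMaxOn (Set.nonempty_Icc.2 hab) hf
  have : Nonempty (Icc a b) := (Set.nonempty_Icc.2 hab).to_subtype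
  exact ⟨s, hs, hc.trans (ciSup_le fun r => hmax r.2)⟩

lemma abs_sub_le_of_eq_add_integral {x w f : ℝ → ℝ} {M : ℝ} (hf : Measurable f)
    (hM : ∀ r, |f r| ≤ M) (hx : ∀ u, 0 ≤ u → x u = x 0 + w u + ∫ r in (0 : ℝ)..u, f r)
    {t s : ℝ} (ht : 0 ≤ t) (hts : t ≤ s) :
    |x s - x t| ≤ |w s - w t| + M * (s - t) := by
  have hint (u : ℝ) : IntervalIntegrable f volume 0 u :=
    (intervalIntegrable_const (c := M)).mono_fun hf.aestronglyMeasurable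
      (ae_of_all _ fun r => by
        simp only [Real.norm_eq_abs]
        exact (hM r).trans (le_abs_self M))
  have hdrift : |∫ r in t..s, f r| ≤ M * (s - t) := by
    have := intervalIntegral.norm_integral_le_of_norm_le_const (a := t) (b := s) fun r _ =>
      (Real.norm_eq_abs (f r)).trans_le (hM r)
    rwa [Real.norm_eq_abs, abs_of_nonneg (sub_nonneg.2 hts)] at this
  have hdiff : x s - x t = (w s - w t) + ∫ r in t..s, f r := by
    rw [hx s (ht.trans hts), hx t ht,
      ← intervalIntegral.integral_interval_sub_left (hint s) (hint t)]
    ring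
  rw [hdiff]
  exact (abs_add_le _ _).trans (by gcongr)

theorem crude_increment_estimate_drift_diffusion_general
    {Ω : Type*} [MeasurableSpace Ω] (P : Measure Ω)
    (W : ℝ → Ω → ℝ) (hW : IsBrownian P W)
    (μdrift : ℝ → ℝ) (hμmeas : Measurable μdrift)
    (μstar : ℝ) (hbound : ∀ x, |μdrift x| ≤ μstar)
    (X : ℝ → Ω → ℝ) (hXcont : ∀ ω, Continuous fun t => X t ω)
    (hSDE : ∀ᵐ ω ∂P, ∀ t : ℝ, 0 ≤ t →
      X t ω = X 0 ω + W t ω + ∫ s in (0:ℝ)..t, μdrift (X s ω))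
    (t δ b : ℝ) (ht : 0 ≤ t) (hδ : 0 < δ) (hb : 0 < b) :
    P {ω | (μstar + b) * δ ≤ ⨆ s : Set.Icc t (t + δ), |X s ω - X t ω|}
      ≤ ENNReal.ofReal (2 * Real.exp (-b ^ 2 * δ / 2)) := by
  have hW_large : ∀ᵐ ω ∂P, (μstar + b) * δ ≤ ⨆ s : Set.Icc t (t + δ), |X s ω - X t ω| →
      ∃ s ∈ Icc t (t + δ), b * δ ≤ |W s ω - W t ω| := by
    filter_upwards [hSDE] with ω hω hX_large
    obtain ⟨s, hs, hXs⟩ := exists_mem_Icc_le_of_le_ciSup (f := fun s => |X s ω - X t ω|)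
      (by fun_prop) (by linarith) hX_large
    have hincr := abs_sub_le_of_eq_add_integral (hμmeas.comp (hXcont ω).measurable)
      (fun r => hbound (X r ω)) hω ht hs.1
    have hμstar : 0 ≤ μstar := (abs_nonneg _).trans (hbound 0)
    have hdrift : μstar * (s - t) ≤ μstar * δ := by gcongr; linarith [hs.2]
    exact ⟨s, hs, by linarith⟩
  calc P {ω | (μstar + b) * δ ≤ ⨆ s : Set.Icc t (t + δ), |X s ω - X t ω|}
      ≤ P {ω | ∃ s ∈ Icc t (t + δ), b * δ ≤ |W s ω - W t ω|} := measure_mono_ae hW_large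
    _ ≤ ENNReal.ofReal (2 * exp (-(b * δ) ^ 2 / (2 * δ))) :=
        hW.measure_exists_Icc_le_abs_sub_le ht hδ (by positivity)
    _ = ENNReal.ofReal (2 * Real.exp (-b ^ 2 * δ / 2)) := by
        congr 3
        field_simp

/-- For `X_t = X_0 + W_t + ∫_0^t μ(X_s) ds` with `|μ| ≤ μ*`, for all
`t ≥ 0`, `δ > 0`, `b > 0`:
`P(sup_{s ∈ [t,t+δ]} |X_s − X_t| ≥ (μ* + b)δ) ≤ 2 exp(−b²δ/2)`. -/
theorem crude_increment_estimate_drift_diffusion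
    {Ω : Type*} [MeasurableSpace Ω] (P : Measure Ω) [IsProbabilityMeasure P]
    (W : ℝ → Ω → ℝ) (hW : IsBrownian P W)
    (μdrift : ℝ → ℝ) (hμmeas : Measurable μdrift)
    (μstar : ℝ) (hbound : ∀ x, |μdrift x| ≤ μstar)
    (X : ℝ → Ω → ℝ) (hXcont : ∀ ω, Continuous fun t => X t ω)
    (hSDE : ∀ᵐ ω ∂P, ∀ t : ℝ, 0 ≤ t →
      X t ω = X 0 ω + W t ω + ∫ s in (0:ℝ)..t, μdrift (X s ω))
    (t δ b : ℝ) (ht : 0 ≤ t) (hδ : 0 < δ) (hb : 0 < b) :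
    P {ω | (μstar + b) * δ ≤ ⨆ s : Set.Icc t (t + δ), |X s ω - X t ω|}
      ≤ ENNReal.ofReal (2 * Real.exp (-b ^ 2 * δ / 2)) :=
  crude_increment_estimate_drift_diffusion_general P W hW μdrift hμmeas μstar hbound X hXcont hSDE t
    δ b ht hδ hb
end
end
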